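/- arXiv:1404.7267 — 3 statements merged into one kernel-verified Lean document; each statement's English description precedes it below -/
import Mathlib

section
/- Let A be a noetherian commutative ring with an action of a group G admitting a Reynolds operator E: A → A^G (an A^G-linear projection onto the invariants satisfying E(ab) = aE(b) for a ∈ A^G). Let T₀ be an A-module that is finitely generated as an A-module, equipped with a compatible G-action and Reynolds operator. Then the invariant submodule T₀^G is finitely generated as an A^G-module. -/
/-!
The span of the invariants in `M` is finitely generated, since `M` is noetherian, and so it is
spanned by finitely many invariants `tᵢ`. An invariant `m = ∑ cᵢ • tᵢ` is fixed by the Reynolds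
operator, which moves the coefficients into `A^G`: `m = E m = ∑ E(cᵢ) • tᵢ`.
-/

theorem IsNoetherian.exists_fin_subset_subset_span (R : Type*) {M : Type*} [Semiring R]
    [AddCommMonoid M] [Module R M] [IsNoetherian R M] (s : Set M) :
    ∃ (n : ℕ) (t : Fin n → M), Set.range t ⊆ s ∧ s ⊆ Submodule.span R (Set.range t) := by
  obtain ⟨T, hTs, hspan⟩ :=
    (Submodule.fg_span_iff_fg_span_finset_subset s).1
      (IsNoetherian.noetherian (Submodule.span R s))
  obtain ⟨n, t, -, ht⟩ := T.finite_toSet.fin_param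
  rw [← ht] at hTs hspan
  exact ⟨n, t, hTs, hspan ▸ Submodule.subset_span⟩

theorem sum_smul_eq_sum_smul_of_reynolds {A M G ι : Type*} [Semiring A] [AddCommMonoid M]
    [Module A M] [SMul G M] (EA : A → A) (EM : M →+ M)
    (hEM_id : ∀ m : M, (∀ g : G, g • m = m) → EM m = m)
    (hEM_rey : ∀ (a : A) (m : M), (∀ g : G, g • m = m) → EM (a • m) = EA a • m)
    (s : Finset ι) (c : ι → A) (t : ι → M) (ht : ∀ i ∈ s, ∀ g : G, g • t i = t i)
    (hinv : ∀ g : G, g • ∑ i ∈ s, c i • t i = ∑ i ∈ s, c i • t i) :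
    ∑ i ∈ s, c i • t i = ∑ i ∈ s, EA (c i) • t i :=
  calc ∑ i ∈ s, c i • t i = EM (∑ i ∈ s, c i • t i) := (hEM_id _ hinv).symm
    _ = ∑ i ∈ s, EA (c i) • t i := by
      rw [map_sum]
      exact Finset.sum_congr rfl fun i hi => hEM_rey _ _ (ht i hi)

theorem stmt_0_general {A : Type*} [CommRing A] [IsNoetherianRing A]
    {G : Type*} [Group G] [MulSemiringAction G A]
    {M : Type*} [AddCommGroup M] [Module A M] [Module.Finite A M]
    [DistribMulAction G M]
    (EA : A → A)
    (hEA_inv : ∀ (a : A) (g : G), g • EA a = EA a)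
    (EM : M → M)
    (hEM_add : ∀ m n : M, EM (m + n) = EM m + EM n)
    (hEM_id : ∀ m : M, (∀ g : G, g • m = m) → EM m = m)
    (hEM_rey : ∀ (a : A) (m : M), (∀ g : G, g • m = m) → EM (a • m) = EA a • m) :
    ∃ (n : ℕ) (t : Fin n → M), (∀ i, ∀ g : G, g • t i = t i) ∧
      ∀ m : M, (∀ g : G, g • m = m) →
        ∃ c : Fin n → A, (∀ i, ∀ g : G, g • c i = c i) ∧ m = ∑ i, c i • t i := by
  obtain ⟨n, t, ht_inv, hspan⟩ :=
    IsNoetherian.exists_fin_subset_subset_span A {m : M | ∀ g : G, g • m = m}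
  refine ⟨n, t, fun i => ht_inv ⟨i, rfl⟩, fun m hm => ?_⟩
  obtain ⟨c, rfl⟩ := (Submodule.mem_span_range_iff_exists_fun A).1 (hspan hm)
  exact ⟨fun i => EA (c i), fun i g => hEA_inv _ g,
    sum_smul_eq_sum_smul_of_reynolds EA (AddMonoidHom.mk' EM hEM_add) hEM_id hEM_rey _ c t
      (fun i _ => ht_inv ⟨i, rfl⟩) hm⟩

/-- If `A` is a noetherian commutative ring with a `G`-action admitting a
Reynolds operator, and `M` (= T₀) is a finitely generated `A`-module with a compatible
`G`-action and Reynolds operator, then the invariant submodule `M^G` is finitely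
generated over `A^G`: there are finitely many invariant elements `t i` such that every
invariant `m` is a combination `∑ cᵢ • tᵢ` with invariant coefficients `cᵢ ∈ A^G`. -/
theorem stmt_0 {A : Type*} [CommRing A] [IsNoetherianRing A]
    {G : Type*} [Group G] [MulSemiringAction G A]
    {M : Type*} [AddCommGroup M] [Module A M] [Module.Finite A M]
    [DistribMulAction G M]
    (hcompat : ∀ (g : G) (a : A) (m : M), g • (a • m) = (g • a) • (g • m))
    (EA : A → A)
    (hEA_add : ∀ a b : A, EA (a + b) = EA a + EA b)
    (hEA_inv : ∀ (a : A) (g : G), g • EA a = EA a)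
    (hEA_id : ∀ a : A, (∀ g : G, g • a = a) → EA a = a)
    (hEA_lin : ∀ a b : A, (∀ g : G, g • a = a) → EA (a * b) = a * EA b)
    (EM : M → M)
    (hEM_add : ∀ m n : M, EM (m + n) = EM m + EM n)
    (hEM_inv : ∀ (m : M) (g : G), g • EM m = EM m)
    (hEM_id : ∀ m : M, (∀ g : G, g • m = m) → EM m = m)
    (hEM_rey : ∀ (a : A) (m : M), (∀ g : G, g • m = m) → EM (a • m) = EA a • m) :
    ∃ (n : ℕ) (t : Fin n → M), (∀ i, ∀ g : G, g • t i = t i) ∧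
      ∀ m : M, (∀ g : G, g • m = m) →
        ∃ c : Fin n → A, (∀ i, ∀ g : G, g • c i = c i) ∧ m = ∑ i, c i • t i :=
  stmt_0_general EA hEA_inv EM hEM_add hEM_id hEM_rey
end

section
/- Let T be an ℕ-graded commutative ring, d > 0, and σ ∈ T_d a homogeneous element of degree d. Then the ring T/(σ − 1) is a finite module over its subring T^{(d)}/(σ − 1), where T^{(d)} = ⊕_{n≥0} T_{nd} is the d-th Veronese subring. -/
/-!
A homogeneous element `x` of degree `n` satisfies `x ^ d ∈ T_{nd}`, so it is integral over the
Veronese subring `T^{(d)}`. Since `T_0 ⊆ T^{(d)}`, homogeneous components of finitely many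
`T_0`-algebra generators generate `T` as a `T^{(d)}`-algebra; being integral, they make `T` a
finite `T^{(d)}`-module, and finiteness passes to every quotient ring of `T`.
-/

section Veronese

variable {T σ : Type*} [CommRing T] [SetLike σ T] (𝒜 : ℕ → σ)

def veronese (d : ℕ) : Subring T := Subring.closure (⋃ n : ℕ, (𝒜 (n * d) : Set T))

variable {𝒜}

theorem mem_veronese {d n : ℕ} {x : T} (hx : x ∈ 𝒜 (n * d)) : x ∈ veronese 𝒜 d :=
  Subring.subset_closure (Set.mem_iUnion.2 ⟨n, hx⟩)

theorem gradeZero_subset_veronese (d : ℕ) : (𝒜 0 : Set T) ⊆ veronese 𝒜 d := fun _ hx =>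
  mem_veronese (n := 0) (by rwa [zero_mul])

variable [AddSubgroupClass σ T] [GradedRing 𝒜]

theorem isIntegral_veronese_of_mem {d n : ℕ} (hd : 0 < d) {x : T} (hx : x ∈ 𝒜 n) :
    IsIntegral (veronese 𝒜 d) x := by
  have hpow : x ^ d ∈ veronese 𝒜 d :=
    mem_veronese (n := n) (by simpa [mul_comm] using SetLike.pow_mem_graded d hx)
  exact .of_pow hd (isIntegral_algebraMap (x := (⟨x ^ d, hpow⟩ : veronese 𝒜 d)))

theorem finiteType_gradeZero_of_closure_eq_top {s : Finset T}
    (hs : Subring.closure ((𝒜 0 : Set T) ∪ s) = ⊤) : Algebra.FiniteType (𝒜 0) T := by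
  refine ⟨⟨s, Subalgebra.toSubring_injective ?_⟩⟩
  rw [Algebra.adjoin_eq_ring_closure, Algebra.top_toSubring, ← hs]
  congr
  ext x
  simp

theorem finite_veronese {d : ℕ} (hd : 0 < d) [Algebra.FiniteType (𝒜 0) T] :
    Module.Finite (veronese 𝒜 d) T := by
  obtain ⟨X, hX, hhom⟩ := GradedAlgebra.exists_finset_adjoin_eq_top_and_homogeneous 𝒜
  have hadjoin : Algebra.adjoin (veronese 𝒜 d) (X : Set T) = ⊤ := by
    refine Algebra.eq_top_iff.2 fun x => ?_
    have hx : x ∈ Algebra.adjoin (𝒜 0) (X : Set T) := hX ▸ Algebra.mem_top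
    rw [Algebra.mem_adjoin_iff] at hx ⊢
    refine Subring.closure_mono (Set.union_subset_union_left _ ?_) hx
    rintro _ ⟨x, rfl⟩
    exact ⟨⟨x, gradeZero_subset_veronese d x.2⟩, rfl⟩
  refine ⟨?_⟩
  rw [← Algebra.top_toSubmodule, ← hadjoin]
  exact fg_adjoin_of_finite X.finite_toSet fun x hx =>
    let ⟨_, hn⟩ := hhom x hx; isIntegral_veronese_of_mem hd hn

end Veronese

theorem Subring.map_mem_span_map {R S : Type*} [CommRing R] [CommRing S] (f : R →+* S)
    (V : Subring R) {G : Set R} {x : R} (hx : x ∈ Submodule.span V G) :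
    f x ∈ Submodule.span (V.map f) (f '' G) := by
  induction hx using Submodule.span_induction with
  | mem x hx => exact Submodule.subset_span (Set.mem_image_of_mem f hx)
  | zero => simp
  | add x y _ _ hx hy => simpa using add_mem hx hy
  | smul r x _ hx =>
    rw [Subring.smul_def, smul_eq_mul, map_mul]
    exact Submodule.smul_mem _ (⟨f r, Set.mem_image_of_mem f r.2⟩ : V.map f) hx

theorem Module.Finite.subring_map_of_surjective {R S : Type*} [CommRing R] [CommRing S]
    {f : R →+* S} (hf : Function.Surjective f) (V : Subring R) [Module.Finite V R] :
    Module.Finite (V.map f) S := by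
  classical
  obtain ⟨G, hG⟩ := Module.Finite.fg_top (R := V) (M := R)
  refine ⟨⟨G.image f, Submodule.eq_top_iff'.2 fun y => ?_⟩⟩
  obtain ⟨x, rfl⟩ := hf y
  simpa using Subring.map_mem_span_map f V (hG ▸ Submodule.mem_top : x ∈ Submodule.span V G)

theorem stmt_10_general {T : Type*} [CommRing T] (𝒜 : ℕ → AddSubgroup T) [GradedRing 𝒜]
    (hfg : ∃ s : Finset T, ∀ x : T, x ∈ Subring.closure ((𝒜 0 : Set T) ∪ s))
    (d : ℕ) (hd : 0 < d) (σ : T) :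
    ∃ gens : Finset (T ⧸ Ideal.span {σ - 1}),
      ∀ y : T ⧸ Ideal.span {σ - 1},
        y ∈ Submodule.span
          (Subring.closure
            (⋃ n : ℕ, (Ideal.Quotient.mk (Ideal.span {σ - 1})) '' (𝒜 (n * d) : Set T)))
          (gens : Set (T ⧸ Ideal.span {σ - 1})) := by
  obtain ⟨s, hs⟩ := hfg
  have : Algebra.FiniteType (𝒜 0) T :=
    finiteType_gradeZero_of_closure_eq_top ((Subring.eq_top_iff' _).2 hs)
  have : Module.Finite (veronese 𝒜 d) T := finite_veronese hd
  have hquot := Module.Finite.subring_map_of_surjective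
    (Ideal.Quotient.mk_surjective (I := Ideal.span {σ - 1})) (veronese 𝒜 d)
  rw [veronese, RingHom.map_closure, Set.image_iUnion] at hquot
  obtain ⟨gens, hgens⟩ := hquot.fg_top
  exact ⟨gens, fun y => hgens ▸ Submodule.mem_top⟩

/-- Let `T = ⊕_{n≥0} T_n` be an ℕ-graded commutative ring which is a
finitely generated `T₀`-algebra, let `d > 0` and let `σ ∈ T_d` be homogeneous of
degree `d`.  Then `T/(σ - 1)` is a finite module over (the image of) the `d`-th
Veronese subring `T^{(d)} = ⊕_n T_{nd}`: there is a finite set generating `T/(σ-1)`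
as a module over the subring generated by the images of the `T_{nd}`. -/
theorem stmt_10 {T : Type*} [CommRing T] (𝒜 : ℕ → AddSubgroup T) [GradedRing 𝒜]
    (hfg : ∃ s : Finset T, ∀ x : T, x ∈ Subring.closure ((𝒜 0 : Set T) ∪ s))
    (d : ℕ) (hd : 0 < d) (σ : T) (hσ : σ ∈ 𝒜 d) :
    ∃ gens : Finset (T ⧸ Ideal.span {σ - 1}),
      ∀ y : T ⧸ Ideal.span {σ - 1},
        y ∈ Submodule.span
          (Subring.closure
            (⋃ n : ℕ, (Ideal.Quotient.mk (Ideal.span {σ - 1})) '' (𝒜 (n * d) : Set T)))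
          (gens : Set (T ⧸ Ideal.span {σ - 1})) :=
  stmt_10_general 𝒜 hfg d hd σ
end

section
/- Let A = ⊕_{d∈ℤ} A_d be a ℤ-graded commutative ring and V = ⊕_{d∈ℤ} V_d a ℤ-graded A-module. Let k be a field, p: A → k a ring homomorphism vanishing on A_d for all d < 0, and p*: V → k a map that is A-linear with respect to p. Define the 'specialized' pair p₀: A → k and p₀*: V → k by p₀ = p on A₀, p₀ = 0 on A_d for d ≠ 0, and (with r := min{ d : p*|_{V_d} ≠ 0 }, assumed to exist) p₀* = p* on V_r and p₀* = 0 on V_d for d ≠ r. Then p₀ is a ring homomorphism and p₀* is A-linear with respect to p₀. -/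
/-!
Every map involved is additive, so it suffices to check multiplicativity on homogeneous
elements. For `a ∈ A_i`, `b ∈ A_j` with `i + j = 0` but `i ≠ 0`, one of `i, j` is negative, so
`p` kills `a` or `b`. For `a ∈ A_d`, `v ∈ V_e` with `d + e = r` but `d ≠ 0`, either `d < 0` and
`p a = 0`, or `e < r` and `p* v = 0` by minimality of `r`.
-/

open DirectSum

theorem lt_zero_or_lt_of_add_eq {ι : Type*} [AddCommMonoid ι] [LinearOrder ι]
    [IsOrderedCancelAddMonoid ι] {d e r : ι} (h : d + e = r) (hd : d ≠ 0) : d < 0 ∨ e < r := by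
  refine (lt_or_gt_of_ne hd).imp_right fun hpos ↦ ?_
  exact h ▸ lt_add_of_pos_left e hpos

theorem map_decompose_of_mem {ι V τ S : Type*} [DecidableEq ι] [AddCommMonoid V] [SetLike τ V]
    [AddSubmonoidClass τ V] (𝒱 : ι → τ) [Decomposition 𝒱] [AddZeroClass S] (f : V →+ S)
    (r : ι) {e : ι} {v : V} (hv : v ∈ 𝒱 e) :
    f (decompose 𝒱 v r) = if e = r then f v else 0 := by
  split_ifs with he
  · rw [decompose_of_mem_same 𝒱 (he ▸ hv)]
  · rw [decompose_of_mem_ne 𝒱 hv he, map_zero]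

theorem map_decompose_add {ι V τ S : Type*} [DecidableEq ι] [AddCommMonoid V] [SetLike τ V]
    [AddSubmonoidClass τ V] (𝒱 : ι → τ) [Decomposition 𝒱] [AddZeroClass S] (f : V →+ S)
    (r : ι) (v w : V) :
    f (decompose 𝒱 (v + w) r) = f (decompose 𝒱 v r) + f (decompose 𝒱 w r) := by
  rw [decompose_add, DirectSum.add_apply, AddMemClass.coe_add, map_add]

section

variable {ι A S σ : Type*} [DecidableEq ι] [AddCommMonoid ι] [Semiring A] [SetLike σ A]
  [AddSubmonoidClass σ A] (𝒜 : ι → σ) [GradedRing 𝒜] [Semiring S]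

theorem map_proj_zero_of_mem (p : A →+* S) {i : ι} {a : A} (ha : a ∈ 𝒜 i) :
    p (GradedRing.proj 𝒜 0 a) = if i = 0 then p a else 0 :=
  map_decompose_of_mem 𝒜 p.toAddMonoidHom 0 ha

variable [LinearOrder ι] [IsOrderedCancelAddMonoid ι]

theorem map_proj_zero_mul_of_mem (p : A →+* S) (hneg : ∀ i < (0 : ι), ∀ a ∈ 𝒜 i, p a = 0)
    {i j : ι} {a b : A} (ha : a ∈ 𝒜 i) (hb : b ∈ 𝒜 j) :
    p (GradedRing.proj 𝒜 0 (a * b))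
      = p (GradedRing.proj 𝒜 0 a) * p (GradedRing.proj 𝒜 0 b) := by
  rw [map_proj_zero_of_mem 𝒜 p (SetLike.mul_mem_graded ha hb), map_proj_zero_of_mem 𝒜 p ha,
    map_proj_zero_of_mem 𝒜 p hb]
  by_cases hi : i = 0
  · subst hi
    simp
  by_cases hij : i + j = 0
  · rcases lt_zero_or_lt_of_add_eq hij hi with hi' | hj'
    · simp [hij, hi, hneg i hi' a ha]
    · simp [hij, hi, hneg j hj' b hb]
  · simp [hij, hi]

/-- The map `p₀` of the paper. -/
def GradedRing.specialize (p : A →+* S) (hneg : ∀ i < (0 : ι), ∀ a ∈ 𝒜 i, p a = 0) :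
    A →+* S where
  toFun a := p (GradedRing.proj 𝒜 0 a)
  map_one' := by
    rw [map_proj_zero_of_mem 𝒜 p SetLike.GradedOne.one_mem, if_pos rfl, map_one]
  map_mul' a b := by
    induction a using Decomposition.inductionOn 𝒜 with
    | zero => simp
    | add a a' ha ha' => simp only [add_mul, map_add, ha, ha']
    | homogeneous a =>
      induction b using Decomposition.inductionOn 𝒜 with
      | zero => simp
      | add b b' hb hb' => simp only [mul_add, map_add, hb, hb']
      | homogeneous b => exact map_proj_zero_mul_of_mem 𝒜 p hneg a.2 b.2
  map_zero' := by simp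
  map_add' a b := by simp

variable {V τ : Type*} [AddCommMonoid V] [Module A V] [SetLike τ V] [AddSubmonoidClass τ V]
  (𝒱 : ι → τ) [Decomposition 𝒱]

theorem map_decompose_smul_of_mem
    (hsmul : ∀ (d e : ι) (a : A) (v : V), a ∈ 𝒜 d → v ∈ 𝒱 e → a • v ∈ 𝒱 (d + e))
    (p : A →+* S) (hneg : ∀ i < (0 : ι), ∀ a ∈ 𝒜 i, p a = 0)
    (f : V →+ S) (hf : ∀ (a : A) (v : V), f (a • v) = p a * f v)
    (r : ι) (hlow : ∀ e < r, ∀ v ∈ 𝒱 e, f v = 0)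
    {d e : ι} {a : A} {v : V} (ha : a ∈ 𝒜 d) (hv : v ∈ 𝒱 e) :
    f (decompose 𝒱 (a • v) r) = p (GradedRing.proj 𝒜 0 a) * f (decompose 𝒱 v r) := by
  rw [map_decompose_of_mem 𝒱 f r (hsmul d e a v ha hv), map_proj_zero_of_mem 𝒜 p ha,
    map_decompose_of_mem 𝒱 f r hv]
  by_cases hd : d = 0
  · subst hd
    simp [hf]
  by_cases hde : d + e = r
  · rcases lt_zero_or_lt_of_add_eq hde hd with hd' | he'
    · simp [hde, hd, hf, hneg d hd' a ha]
    · simp [hde, hd, hf, hlow e he' v hv]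
  · simp [hde, hd]

theorem map_decompose_smul
    (hsmul : ∀ (d e : ι) (a : A) (v : V), a ∈ 𝒜 d → v ∈ 𝒱 e → a • v ∈ 𝒱 (d + e))
    (p : A →+* S) (hneg : ∀ i < (0 : ι), ∀ a ∈ 𝒜 i, p a = 0)
    (f : V →+ S) (hf : ∀ (a : A) (v : V), f (a • v) = p a * f v)
    (r : ι) (hlow : ∀ e < r, ∀ v ∈ 𝒱 e, f v = 0) (a : A) (v : V) :
    f (decompose 𝒱 (a • v) r) = GradedRing.specialize 𝒜 p hneg a * f (decompose 𝒱 v r) := by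
  induction a using Decomposition.inductionOn 𝒜 with
  | zero => simp
  | add a a' ha ha' => rw [add_smul, map_decompose_add, ha, ha', map_add, add_mul]
  | homogeneous a =>
    induction v using Decomposition.inductionOn 𝒱 with
    | zero => simp
    | add v v' hv hv' => rw [smul_add, map_decompose_add, hv, hv', map_decompose_add, mul_add]
    | homogeneous v => exact map_decompose_smul_of_mem 𝒜 𝒱 hsmul p hneg f hf r hlow a.2 v.2

end

/-- Let `A = ⊕_d A_d` be a ℤ-graded commutative ring, `V = ⊕_d V_d` a
ℤ-graded `A`-module, `p : A → k` a ring homomorphism into a field vanishing on `A_d`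
for `d < 0`, and `p* : V → k` additive and `A`-linear with respect to `p`.  Let `r` be
the least degree with `p*` nonzero on `V_r` (assumed to exist).  Then the specialized
pair `p₀ := p ∘ (projection onto A₀)` and `p₀* := p* ∘ (projection onto V_r)` satisfy:
`p₀` is a ring homomorphism and `p₀*` is additive and `A`-linear with respect to
`p₀`. -/
theorem stmt_16 {A V k : Type*} [CommRing A] [AddCommGroup V] [Module A V] [Field k]
    (𝒜 : ℤ → AddSubgroup A) [GradedRing 𝒜]
    (𝒱 : ℤ → AddSubgroup V) [DirectSum.Decomposition 𝒱]
    (hsmul : ∀ (d e : ℤ) (a : A) (v : V), a ∈ 𝒜 d → v ∈ 𝒱 e → a • v ∈ 𝒱 (d + e))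
    (p : A →+* k) (pstar : V → k)
    (hadd : ∀ v w : V, pstar (v + w) = pstar v + pstar w)
    (hlin : ∀ (a : A) (v : V), pstar (a • v) = p a * pstar v)
    (hneg : ∀ d < (0 : ℤ), ∀ a ∈ 𝒜 d, p a = 0)
    (r : ℤ) (hr : IsLeast {d : ℤ | ∃ v ∈ 𝒱 d, pstar v ≠ 0} r) :
    (∀ a b : A, p (GradedRing.proj 𝒜 0 (a * b))
        = p (GradedRing.proj 𝒜 0 a) * p (GradedRing.proj 𝒜 0 b)) ∧
    p (GradedRing.proj 𝒜 0 1) = 1 ∧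
    (∀ a b : A, p (GradedRing.proj 𝒜 0 (a + b))
        = p (GradedRing.proj 𝒜 0 a) + p (GradedRing.proj 𝒜 0 b)) ∧
    (∀ v w : V, pstar ((DirectSum.decompose 𝒱 (v + w) r : 𝒱 r) : V)
        = pstar ((DirectSum.decompose 𝒱 v r : 𝒱 r) : V)
          + pstar ((DirectSum.decompose 𝒱 w r : 𝒱 r) : V)) ∧
    (∀ (a : A) (v : V), pstar ((DirectSum.decompose 𝒱 (a • v) r : 𝒱 r) : V)
        = p (GradedRing.proj 𝒜 0 a) * pstar ((DirectSum.decompose 𝒱 v r : 𝒱 r) : V)) := by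
  let f : V →+ k := AddMonoidHom.mk' pstar hadd
  have hlow : ∀ e < r, ∀ v ∈ 𝒱 e, f v = 0 := fun e he v hv ↦
    by_contra fun h ↦ (hr.2 ⟨v, hv, h⟩).not_gt he
  let p₀ := GradedRing.specialize 𝒜 p hneg
  exact ⟨map_mul p₀, map_one p₀, map_add p₀, map_decompose_add 𝒱 f r,
    map_decompose_smul 𝒜 𝒱 hsmul p hneg f hlin r hlow⟩
end
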